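/- Define tH_KSs^{2+5/4}(δ; t; q₁,p₁,q₂,p₂) = tH_{III(D7)}(δ;t;q₁,p₁) + tH_{III(D7)}(δ;t;q₂,p₂) − t(2p₂/q₁ + p₁ + p₂) with tH_{III(D7)}(a;t;q,p) = p²q² + aqp + tp + q, and define tH_KSs^{3/2+5/4}(t; q₁,p₁,q₂,p₂) = tH_{III(D8)}(t;q₁,p₁) + tH_{III(D8)}(t;q₂,p₂) − 2q₁q₂/t + q₁ + q₂ with tH_{III(D8)}(t;q,p) = p²q² + qp − q − t/q. Then under the substitution q₁ = −t̃/q̃₂, p₁ = (q̃₂/t̃)(p̃₂q̃₂ − ε⁻¹), q₂ = −t̃/q̃₁, p₂ = (q̃₁/t̃)(p̃₁q̃₁ − ε⁻¹), t = ε t̃, δ = −2ε⁻¹, one has lim_{ε→0} [ t·H_KSs^{2+5/4}(δ; t; q₁,p₁,q₂,p₂) + p̃₁q̃₁ + p̃₂q̃₂ + 2ε⁻² ] = t̃·H_KSs^{3/2+5/4}(t̃; q̃₁,p̃₁,q̃₂,p̃₂). -/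

import Mathlib

/-- `t·H_{III(D7)}(a;t;q,p) = p²q² + aqp + tp + q`. -/
def tHIIID7 (a t q p : ℂ) : ℂ := p ^ 2 * q ^ 2 + a * q * p + t * p + q

/-- `t·H_{III(D8)}(t;q,p) = p²q² + qp − q − t/q`. -/
noncomputable def tHIIID8 (t q p : ℂ) : ℂ := p ^ 2 * q ^ 2 + q * p - q - t / q

/-- `t·H_KSs^{2+5/4}(δ;t;q₁,p₁,q₂,p₂)`. -/
noncomputable def tHKSs_2_54 (δ t q1 p1 q2 p2 : ℂ) : ℂ :=
  tHIIID7 δ t q1 p1 + tHIIID7 δ t q2 p2 - t * (2 * p2 / q1 + p1 + p2)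

/-- `t·H_KSs^{3/2+5/4}(t;q₁,p₁,q₂,p₂)`. -/
noncomputable def tHKSs_32_54 (t q1 p1 q2 p2 : ℂ) : ℂ :=
  tHIIID8 t q1 p1 + tHIIID8 t q2 p2 - 2 * q1 * q2 / t + q1 + q2

/-! After the substitution each `III(D7)` Hamiltonian becomes the `III(D8)` one up to
`−p̃q̃ − ε⁻² + O(ε)`: the `ε⁻¹` terms of `p²q²` and `δqp` cancel. The coupling term
contributes `−2q̃₁q̃₂/t̃ + q̃₁ + q̃₂ + O(ε)`, and the `O(ε)` terms of the two
Hamiltonians cancel those of the coupling except for `2εp̃₁q̃₁²q̃₂/t̃`. So for `ε ≠ 0`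
the expression is an affine function of `ε`, and the limit is its value at `0`. -/

theorem tHIIID7_degeneration_eq {ε tt q : ℂ} (hε : ε ≠ 0) (htt : tt ≠ 0) (hq : q ≠ 0) (p : ℂ) :
    tHIIID7 (-(2 * ε⁻¹)) (ε * tt) (-(tt / q)) (q / tt * (p * q - ε⁻¹)) =
      tHIIID8 tt q p - p * q - (ε ^ 2)⁻¹ + ε * (p * q ^ 2) := by
  unfold tHIIID7 tHIIID8
  field_simp
  ring

theorem tHKSs_2_54_degeneration_eq {ε tt q1 q2 : ℂ} (hε : ε ≠ 0) (htt : tt ≠ 0) (hq1 : q1 ≠ 0)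
    (hq2 : q2 ≠ 0) (p1 p2 : ℂ) :
    tHKSs_2_54 (-(2 * ε⁻¹)) (ε * tt) (-(tt / q2)) (q2 / tt * (p2 * q2 - ε⁻¹))
        (-(tt / q1)) (q1 / tt * (p1 * q1 - ε⁻¹)) + p1 * q1 + p2 * q2 + 2 * (ε ^ 2)⁻¹ =
      tHKSs_32_54 tt q1 p1 q2 p2 + ε * (2 * p1 * q1 ^ 2 * q2 / tt) := by
  rw [tHKSs_2_54, tHIIID7_degeneration_eq hε htt hq2, tHIIID7_degeneration_eq hε htt hq1,
    tHKSs_32_54]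
  field_simp
  ring

/-- Degeneration `2+5/4 → 3/2+5/4`: under `q₁ = −t̃/q̃₂`, `p₁ = (q̃₂/t̃)(p̃₂q̃₂ − ε⁻¹)`,
`q₂ = −t̃/q̃₁`, `p₂ = (q̃₁/t̃)(p̃₁q̃₁ − ε⁻¹)`, `t = εt̃`, `δ = −2ε⁻¹`, the quantity
`t·H_KSs^{2+5/4} + p̃₁q̃₁ + p̃₂q̃₂ + 2ε⁻²` tends, as `ε → 0`, to
`t̃·H_KSs^{3/2+5/4}(t̃;q̃₁,p̃₁,q̃₂,p̃₂)`. -/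
theorem degeneration_2_54_to_32_54 (tt q1 p1 q2 p2 : ℂ)
    (htt : tt ≠ 0) (hq1 : q1 ≠ 0) (hq2 : q2 ≠ 0) :
    Filter.Tendsto
      (fun ε : ℂ =>
        tHKSs_2_54 (-(2 * ε⁻¹)) (ε * tt) (-(tt / q2)) (q2 / tt * (p2 * q2 - ε⁻¹))
            (-(tt / q1)) (q1 / tt * (p1 * q1 - ε⁻¹))
          + p1 * q1 + p2 * q2 + 2 * (ε ^ 2)⁻¹)
      (nhdsWithin 0 {ε : ℂ | ε ≠ 0})
      (nhds (tHKSs_32_54 tt q1 p1 q2 p2)) := by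
  have affine_continuous :
      Continuous fun ε : ℂ => tHKSs_32_54 tt q1 p1 q2 p2 + ε * (2 * p1 * q1 ^ 2 * q2 / tt) := by
    fun_prop
  have affine_limit := affine_continuous.tendsto' 0 _ (by rw [zero_mul, add_zero])
  refine (affine_limit.mono_left nhdsWithin_le_nhds).congr' ?_
  exact eventually_nhdsWithin_of_forall fun ε hε ↦
    (tHKSs_2_54_degeneration_eq hε htt hq1 hq2 p1 p2).symm
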